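/- Let θ ∈ [0,1] and μ, ν ∈ ℝ, and set a = ½(θ² − 1/3)μ, b = ½(θ² − 1/3)(1 − μ), c = ½(1 − θ²)ν, d = ½(1 − θ²)(1 − ν). Then the function x ↦ ((1 − a x²)(1 − c x²))/((1 + b x²)(1 + d x²)) − tanh(x)/x is O(x⁴) as x → 0 within ℝ \ {0}; that is, for every admissible choice of θ, μ, ν the linearized dispersion relation of the new abcd-Boussinesq system agrees with that of the Euler equations up to and including the second-order term, so all systems of the family are asymptotically equivalent at this order. -/

import Mathlib

/-!
Both dispersion relations equal `1 - x²/3 + O(x⁴)`. For the rational one, the `x²`-coefficient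
is `1/3 - (a + b + c + d)`, which vanishes for every `θ, μ, ν`. For `tanh x / x` it follows from
the Taylor expansions of `sinh` and `cosh`, read off from that of `exp`.
-/

open Filter Topology Asymptotics

namespace Real

lemma exp_neg_sub_sum_range_isBigO_pow (n : ℕ) :
    (fun x ↦ exp (-x) - ∑ i ∈ Finset.range n, (-x) ^ i / i.factorial) =O[𝓝 0] (· ^ n) :=
  ((exp_sub_sum_range_isBigO_pow n).comp_tendsto (continuous_neg.tendsto' 0 0 neg_zero)).trans <|
    isBigO_of_le _ fun x ↦ by simp only [Function.comp_apply, norm_pow, norm_neg, le_refl]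

lemma sinh_sub_taylor_isBigO :
    (fun x ↦ sinh x - (x + x ^ 3 / 6)) =O[𝓝 0] (· ^ 5) := by
  refine (((exp_sub_sum_range_isBigO_pow 5).sub
    (exp_neg_sub_sum_range_isBigO_pow 5)).const_mul_left (1 / 2)).congr_left fun x ↦ ?_
  simp only [Finset.sum_range_succ, Finset.sum_range_zero, Nat.factorial, sinh_eq]
  push_cast
  ring

lemma cosh_sub_taylor_isBigO :
    (fun x ↦ cosh x - (1 + x ^ 2 / 2)) =O[𝓝 0] (· ^ 4) := by
  refine (((exp_sub_sum_range_isBigO_pow 4).add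
    (exp_neg_sub_sum_range_isBigO_pow 4)).const_mul_left (1 / 2)).congr_left fun x ↦ ?_
  simp only [Finset.sum_range_succ, Finset.sum_range_zero, Nat.factorial, cosh_eq]
  push_cast
  ring

lemma tanh_sub_taylor_isBigO :
    (fun x ↦ tanh x - (x - x ^ 3 / 3)) =O[𝓝 0] (· ^ 5) := by
  -- `sinh x - (x - x³/3) cosh x = (sinh x - (x + x³/6)) - (x - x³/3)(cosh x - (1 + x²/2)) + x⁵/6`
  have hnum : (fun x ↦ sinh x - (x - x ^ 3 / 3) * cosh x) =O[𝓝 0] (· ^ 5) := by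
    have hpoly : (fun x : ℝ ↦ x - x ^ 3 / 3) =O[𝓝 0] (· ^ 1) :=
      ((isBigO_refl (· ^ 1) _).sub ((isLittleO_pow_pow (by norm_num : 1 < 3)).isBigO.const_mul_left
        (1 / 3))).congr_left fun x ↦ by ring
    have hprod := (hpoly.mul cosh_sub_taylor_isBigO).congr_right fun x ↦ (pow_add x 1 4).symm
    refine ((sinh_sub_taylor_isBigO.sub hprod).add
      ((isBigO_refl (· ^ 5) _).const_mul_left (1 / 6))).congr_left fun x ↦ by ring
  have hcosh : (fun x ↦ (cosh x)⁻¹) =O[𝓝 0] (fun _ ↦ (1 : ℝ)) :=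
    (continuous_cosh.continuousAt.inv₀ (cosh_pos 0).ne').tendsto.isBigO_one ℝ
  refine ((hnum.mul hcosh).congr_left fun x ↦ ?_).congr_right fun x ↦ mul_one _
  rw [tanh_eq_sinh_div_cosh]
  field_simp [(cosh_pos x).ne']

lemma tanh_div_self_sub_isBigO :
    (fun x ↦ tanh x / x - (1 - x ^ 2 / 3)) =O[𝓝[≠] 0] (· ^ 4) := by
  refine ((tanh_sub_taylor_isBigO.mono nhdsWithin_le_nhds).mul
    (isBigO_refl (fun x : ℝ ↦ x⁻¹) _)).congr' ?_ ?_
  · filter_upwards [self_mem_nhdsWithin] with x (hx : x ≠ 0)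
    field_simp
  · filter_upwards [self_mem_nhdsWithin] with x (hx : x ≠ 0)
    field_simp

end Real

/-- `c²/(gD)` for the abcd-Boussinesq system, as a function of `x = Dk`. -/
noncomputable def abcdDispersion (a b c d x : ℝ) : ℝ :=
  ((1 - a * x ^ 2) * (1 - c * x ^ 2)) / ((1 + b * x ^ 2) * (1 + d * x ^ 2))

lemma abcdDispersion_sub_isBigO {a b c d : ℝ} (h : a + b + c + d = 1 / 3) :
    (fun x ↦ abcdDispersion a b c d x - (1 - x ^ 2 / 3)) =O[𝓝 0] (· ^ 4) := by
  have hb : ∀ᶠ x in 𝓝 (0 : ℝ), 1 + b * x ^ 2 ≠ 0 :=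
    (show ContinuousAt (fun x : ℝ ↦ 1 + b * x ^ 2) 0 by fun_prop).eventually_ne (by simp)
  have hd : ∀ᶠ x in 𝓝 (0 : ℝ), 1 + d * x ^ 2 ≠ 0 :=
    (show ContinuousAt (fun x : ℝ ↦ 1 + d * x ^ 2) 0 by fun_prop).eventually_ne (by simp)
  -- the difference is `x⁴` times this quotient once `h` cancels the `x²`-terms of the numerator
  have hquot : (fun x ↦ (a * c - b * d + (b + d) / 3 + b * d * x ^ 2 / 3) /
      ((1 + b * x ^ 2) * (1 + d * x ^ 2))) =O[𝓝 0] (fun _ ↦ (1 : ℝ)) :=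
    ((ContinuousAt.div (by fun_prop) (by fun_prop) (by simp)).tendsto).isBigO_one ℝ
  refine ((isBigO_refl (· ^ 4) _).mul hquot).congr' ?_ (by simp)
  filter_upwards [hb, hd] with x hbx hdx
  have hden := mul_ne_zero hbx hdx
  rw [abcdDispersion, mul_div_assoc', eq_sub_iff_add_eq, div_add' _ _ _ hden, div_left_inj' hden]
  linear_combination x ^ 2 * h

theorem new_abcd_second_order_equivalence_general (θ μ ν a b c d : ℝ)
    (ha : a = (1/2) * (θ^2 - 1/3) * μ)
    (hb : b = (1/2) * (θ^2 - 1/3) * (1 - μ))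
    (hc : c = (1/2) * (1 - θ^2) * ν)
    (hd : d = (1/2) * (1 - θ^2) * (1 - ν)) :
    (fun x : ℝ =>
        ((1 - a * x^2) * (1 - c * x^2)) / ((1 + b * x^2) * (1 + d * x^2))
          - Real.tanh x / x)
      =O[𝓝[≠] (0:ℝ)] fun x : ℝ => x^4 := by
  have hsum : a + b + c + d = 1 / 3 := by rw [ha, hb, hc, hd]; ring
  refine (((abcdDispersion_sub_isBigO hsum).mono nhdsWithin_le_nhds).sub
    Real.tanh_div_self_sub_isBigO).congr_left fun x ↦ ?_
  rw [abcdDispersion]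
  ring

/-- For θ ∈ [0,1] and μ, ν ∈ ℝ, with
a = ½(θ² − 1/3)μ, b = ½(θ² − 1/3)(1 − μ), c = ½(1 − θ²)ν, d = ½(1 − θ²)(1 − ν),
((1 − a x²)(1 − c x²))/((1 + b x²)(1 + d x²)) − tanh(x)/x = O(x⁴)
as x → 0 within ℝ \ {0}. -/
theorem new_abcd_second_order_equivalence (θ μ ν a b c d : ℝ)
    (hθ : θ ∈ Set.Icc (0:ℝ) 1)
    (ha : a = (1/2) * (θ^2 - 1/3) * μ)
    (hb : b = (1/2) * (θ^2 - 1/3) * (1 - μ))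
    (hc : c = (1/2) * (1 - θ^2) * ν)
    (hd : d = (1/2) * (1 - θ^2) * (1 - ν)) :
    (fun x : ℝ =>
        ((1 - a * x^2) * (1 - c * x^2)) / ((1 + b * x^2) * (1 + d * x^2))
          - Real.tanh x / x)
      =O[𝓝[≠] (0:ℝ)] fun x : ℝ => x^4 :=
  new_abcd_second_order_equivalence_general θ μ ν a b c d ha hb hc hd
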